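/- arXiv:2112.02158 — 3 statements merged into one kernel-verified Lean document; each statement's English description precedes it below -/
import Mathlib

section
/- Let (M,d) be a compact metric space and let φ: ℝ × M → M be a continuous flow (φ(0,x) = x and φ(s+t,x) = φ(s,φ(t,x))) for which there exists k₁ ≥ 0 with d(φ(t,x), φ(t,y)) ≤ k₁ d(x,y) for all t ∈ ℝ and x,y ∈ M. Let Ω be the set of all continuous curves ℝ → M with the metric ρ. Then the map f: M → Ω defined by f(x) = (t ↦ φ(t,x)) is injective and continuous, its inverse is continuous on the image f(M) (so f is a homeomorphism onto f(M)), and f(φ(1,x)) = F₁(f(x)) for every x ∈ M, i.e. f conjugates the time-one map of φ with the time-one shift F₁. -/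
open Filter intervalIntegral

lemma summable_two_pow_neg_abs : Summable (fun i : ℤ => (2:ℝ)^(-|i|)) := by
  apply Summable.of_nat_of_neg <;>
  · simp only [Int.abs_natCast, abs_neg]
    have : ∀ n : ℕ, (2:ℝ)^(-(n:ℤ)) = (2⁻¹:ℝ)^n := by
      intro n; rw [zpow_neg, zpow_natCast, inv_pow]
    simp only [this]
    exact summable_geometric_of_lt_one (by norm_num) (by norm_num)

/-- The metric `ρ` on the space of curves `ℝ → M`. -/
noncomputable def rho {M : Type*} [PseudoMetricSpace M] (γ₁ γ₂ : ℝ → M) : ℝ :=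
  ∑' i : ℤ, (2 : ℝ) ^ (-|i|) * ∫ t in (i : ℝ)..((i : ℝ) + 1), dist (γ₁ t) (γ₂ t)

/-- The time-one shift on curves: `F₁(γ)(t) = γ(t + 1)`. -/
def timeOneShift {M : Type*} (γ : ℝ → M) : ℝ → M := fun t => γ (t + 1)

/-- A curve `γ : ℝ → M` is `L`-Lipschitz. -/
def LipschitzCurve {M : Type*} [PseudoMetricSpace M] (L : ℝ) (γ : ℝ → M) : Prop :=
  ∀ s t : ℝ, dist (γ s) (γ t) ≤ L * |s - t|

/-- `E` is an `(n, ε)`-dense subset of `F` for the map `f` and the distance `d`: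
`E ⊆ F` and the dynamical balls `{y | d_n^f(x,y) < ε}`, `x ∈ E`, cover `F`. -/
def IsDynCover {X : Type*} (d : X → X → ℝ) (f : X → X) (F : Set X) (ε : ℝ) (n : ℕ)
    (E : Finset X) : Prop :=
  ↑E ⊆ F ∧ ∀ y ∈ F, ∃ x ∈ E, ∀ i < n, d (f^[i] x) (f^[i] y) < ε

/-- `S_d(f, ε, n)`: the minimal cardinality of an `(n, ε)`-dense subset of `F`. -/
noncomputable def coverCard {X : Type*} (d : X → X → ℝ) (f : X → X) (F : Set X) (ε : ℝ)
    (n : ℕ) : ℕ∞ :=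
  ⨅ (E : Finset X) (_ : IsDynCover d f F ε n E), (E.card : ℕ∞)

/-- The topological entropy of `f` on `F`, w.r.t. the distance `d`:
`h(f) = lim_{ε → 0⁺} limsup_{n → ∞} (1/n) log S_d(f, ε, n)`; since the inner rate is
antitone in `ε`, the limit is realized as the supremum over `ε > 0`. -/
noncomputable def topEntropy {X : Type*} (d : X → X → ℝ) (f : X → X) (F : Set X) : EReal :=
  ⨆ (ε : ℝ) (_ : (0 : ℝ) < ε),
    atTop.limsup fun n : ℕ => ENNReal.log (coverCard d f F ε n) / (n : EReal)


/-- Let `φ` be a continuous flow on a compact metric space `M` which is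
uniformly `k₁`-Lipschitz in the space variable. Then the map `f : M → Ω`, `f(x) = (t ↦ φ(t,x))`,
is injective, continuous (from `d` to `ρ`), has continuous inverse on its image, and
conjugates the time-one map of the flow with the time-one shift: `f(φ(1,x)) = F₁(f(x))`. -/
theorem flow_embeds_in_curve_space {M : Type*} [MetricSpace M] [CompactSpace M]
    (φ : ℝ → M → M) (hφ : Continuous fun p : ℝ × M => φ p.1 p.2)
    (hφ0 : ∀ x, φ 0 x = x) (hφadd : ∀ s t x, φ (s + t) x = φ s (φ t x))
    (k₁ : ℝ) (hk₁ : 0 ≤ k₁) (hlip : ∀ t x y, dist (φ t x) (φ t y) ≤ k₁ * dist x y) :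
    (Function.Injective fun x : M => (fun t => φ t x : ℝ → M)) ∧
    (∀ x : M, ∀ ε > (0 : ℝ), ∃ δ > (0 : ℝ), ∀ y : M,
      dist x y < δ → rho (fun t => φ t x) (fun t => φ t y) < ε) ∧
    (∀ x : M, ∀ ε > (0 : ℝ), ∃ δ > (0 : ℝ), ∀ y : M,
      rho (fun t => φ t x) (fun t => φ t y) < δ → dist x y < ε) ∧
    (∀ x : M, (fun t => φ t (φ 1 x)) = timeOneShift (fun t => φ t x)) := by
  set K := k₁ + 1 with hKdef
  have hK : 0 < K := by positivity
  have hlip' : ∀ t (x y : M), dist (φ t x) (φ t y) ≤ K * dist x y := fun t x y =>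
    (hlip t x y).trans (by nlinarith [dist_nonneg (x := x) (y := y)])
  have hinv : ∀ t (x y : M), dist x y ≤ K * dist (φ t x) (φ t y) := by
    intro t x y
    have hx : ∀ z : M, φ (-t) (φ t z) = z := by
      intro z; rw [← hφadd]; simp [hφ0]
    calc dist x y = dist (φ (-t) (φ t x)) (φ (-t) (φ t y)) := by rw [hx, hx]
      _ ≤ K * dist (φ t x) (φ t y) := hlip' _ _ _
  have hcont : ∀ x : M, Continuous fun t => φ t x := fun x =>
    hφ.comp (continuous_id.prodMk continuous_const)
  -- basic facts about terms of rho
  have key : ∀ x y : M,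
      (Summable fun i : ℤ => (2:ℝ)^(-|i|) * ∫ t in (i:ℝ)..((i:ℝ)+1), dist (φ t x) (φ t y)) ∧
      rho (fun t => φ t x) (fun t => φ t y) ≤
        (∑' i : ℤ, (2:ℝ)^(-|i|)) * (K * dist x y) ∧
      dist x y / K ≤ rho (fun t => φ t x) (fun t => φ t y) := by
    intro x y
    have hdc : Continuous fun t => dist (φ t x) (φ t y) := (hcont x).dist (hcont y)
    have hint : ∀ i : ℤ, IntervalIntegrable (fun t => dist (φ t x) (φ t y))
        MeasureTheory.volume (i:ℝ) ((i:ℝ)+1) := fun i => hdc.intervalIntegrable _ _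
    have hterm_nonneg : ∀ i : ℤ,
        0 ≤ (2:ℝ)^(-|i|) * ∫ t in (i:ℝ)..((i:ℝ)+1), dist (φ t x) (φ t y) := by
      intro i
      apply mul_nonneg (by positivity)
      exact intervalIntegral.integral_nonneg (by linarith) (fun t _ => dist_nonneg)
    have hterm_le : ∀ i : ℤ,
        (2:ℝ)^(-|i|) * (∫ t in (i:ℝ)..((i:ℝ)+1), dist (φ t x) (φ t y)) ≤
        (2:ℝ)^(-|i|) * (K * dist x y) := by
      intro i
      apply mul_le_mul_of_nonneg_left _ (by positivity)
      calc (∫ t in (i:ℝ)..((i:ℝ)+1), dist (φ t x) (φ t y))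
          ≤ ∫ _ in (i:ℝ)..((i:ℝ)+1), K * dist x y := by
            apply intervalIntegral.integral_mono_on (by linarith) (hint i)
              (intervalIntegrable_const) (fun t _ => hlip' t x y)
        _ = K * dist x y := by simp
    have hsum' : Summable fun i : ℤ => (2:ℝ)^(-|i|) * (K * dist x y) :=
      summable_two_pow_neg_abs.mul_right _
    have hsum : Summable fun i : ℤ =>
        (2:ℝ)^(-|i|) * ∫ t in (i:ℝ)..((i:ℝ)+1), dist (φ t x) (φ t y) :=
      Summable.of_nonneg_of_le hterm_nonneg hterm_le hsum'
    refine ⟨hsum, ?_, ?_⟩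
    · calc rho (fun t => φ t x) (fun t => φ t y)
          ≤ ∑' i : ℤ, (2:ℝ)^(-|i|) * (K * dist x y) := Summable.tsum_le_tsum hterm_le hsum hsum'
        _ = (∑' i : ℤ, (2:ℝ)^(-|i|)) * (K * dist x y) := tsum_mul_right
    · have h0 : (2:ℝ)^(-|(0:ℤ)|) * (∫ t in ((0:ℤ):ℝ)..(((0:ℤ):ℝ)+1), dist (φ t x) (φ t y)) ≤
          rho (fun t => φ t x) (fun t => φ t y) :=
        Summable.le_tsum hsum 0 (fun i _ => hterm_nonneg i)
      have h1 : dist x y / K ≤ ∫ t in ((0:ℤ):ℝ)..(((0:ℤ):ℝ)+1), dist (φ t x) (φ t y) := by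
        calc dist x y / K = ∫ _ in ((0:ℤ):ℝ)..(((0:ℤ):ℝ)+1), dist x y / K := by simp
          _ ≤ ∫ t in ((0:ℤ):ℝ)..(((0:ℤ):ℝ)+1), dist (φ t x) (φ t y) := by
            apply intervalIntegral.integral_mono_on (by norm_num)
              intervalIntegrable_const (hint 0)
            intro t _
            rw [div_le_iff₀ hK, mul_comm]
            exact hinv t x y
      simpa using h1.trans (by simpa using h0)
  set S : ℝ := ∑' i : ℤ, (2:ℝ)^(-|i|) with hSdef
  have hS : 0 ≤ S := tsum_nonneg (fun i => by positivity)
  refine ⟨?_, ?_, ?_, ?_⟩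
  · intro x y hxy
    have := congrFun hxy 0
    simpa [hφ0] using this
  · intro x ε hε
    refine ⟨ε / (S * K + 1), by positivity, fun y hy => ?_⟩
    have h1 := (key x y).2.1
    have h2 : dist x y * (S * K + 1) < ε := by
      rw [← lt_div_iff₀ (by positivity)]; exact hy
    nlinarith [dist_nonneg (x := x) (y := y)]
  · intro x ε hε
    refine ⟨ε / K, by positivity, fun y hy => ?_⟩
    have h1 := (key x y).2.2
    have : dist x y / K < ε / K := lt_of_le_of_lt h1 hy
    exact (div_lt_div_iff_of_pos_right hK).mp this
  · intro x
    funext t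
    exact (hφadd t 1 x).symm
end

section
/- Let α ≥ 2 be an integer and let I₁, …, I_α : [0,1] → ℝ² be Lipschitz arcs with I_j(0) = I_j(1) = 0 for every j, such that there is μ > 0 with ∫_0^1 |I_j(t) − I_k(t)| dt = μ for all j ≠ k. Let Ω* be the set of curves γ: ℝ → ℝ² obtained by concatenating these arcs, i.e. γ ∈ Ω* iff there is a sequence (j_i)_{i∈ℤ} in {1,…,α} with γ(i+s) = I_{j_i}(s) for all i ∈ ℤ and s ∈ [0,1]. Then Ω* is invariant under the time-one shift F₁, and the topological entropy of F₁ on (Ω*, ρ) equals log α. -/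
open Filter

/-- The plane `ℝ²` with the Euclidean distance. -/
abbrev Plane := EuclideanSpace ℝ (Fin 2)

/-- The set `Ω*` of curves obtained by concatenating the arcs `I j`, `j ∈ {1,…,α}`:
`γ ∈ Ω*` iff there is a sequence `(j_i)_{i ∈ ℤ}` with `γ(i + s) = I_{j_i}(s)` for all
`i ∈ ℤ` and `s ∈ [0,1]`. -/
def arcConcatenations {α : ℕ} (I : Fin α → ℝ → Plane) : Set (ℝ → Plane) :=
  {γ | ∃ js : ℤ → Fin α, ∀ i : ℤ, ∀ s ∈ Set.Icc (0 : ℝ) 1, γ ((i : ℝ) + s) = I (js i) s}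

/-! On concatenations, `ρ(γ₁, γ₂) = μ · ∑_{i : a i ≠ b i} 2^{-|i|}` where `a`, `b` are the symbol
sequences, so `(Ω*, F₁)` is the full shift on `α` symbols with a weighted Hamming metric. Two orbits
stay `ε`-close for `n` steps as soon as their symbols agree on a window `[-k, n + k)`, with `k`
depending only on `ε`; this gives covers by `α^(n + 2k)` points. Conversely, two words of length `n`
differing at some time `m` give orbits `μ` apart at time `m`, so an `(n, μ/2)`-cover has at least
`α^n` points. -/

open scoped ENNReal Topology

section Entropy

variable {X : Type*} {d : X → X → ℝ} {f : X → X} {F : Set X}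

theorem ENNReal.log_natCast_pow {α : ℕ} (hα : 0 < α) (n : ℕ) :
    ENNReal.log (((α ^ n : ℕ) : ℕ∞) : ℝ≥0∞) = (n : EReal) * Real.log α := by
  rw [ENat.toENNReal_coe, Nat.cast_pow, ENNReal.log_pow,
    ENNReal.log_pos_real (by exact_mod_cast hα.ne') (ENNReal.natCast_ne_top α)]
  simp

theorem topEntropy_le_log {α : ℕ} (hα : 0 < α)
    (h : ∀ ε > 0, ∃ c : ℕ, ∀ n, coverCard d f F ε n ≤ (α ^ (n + c) : ℕ)) :
    topEntropy d f F ≤ Real.log α := by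
  refine iSup₂_le fun ε hε => ?_
  obtain ⟨c, hc⟩ := h ε hε
  have hrate : ∀ᶠ n : ℕ in atTop, ENNReal.log (coverCard d f F ε n) / (n : EReal)
      ≤ ((Real.log α + c * Real.log α / n : ℝ) : EReal) := by
    filter_upwards [eventually_ge_atTop 1] with n hn
    have hlog : ENNReal.log (coverCard d f F ε n) ≤ ((n + c : ℕ) : EReal) * Real.log α := by
      rw [← ENNReal.log_natCast_pow hα]
      exact ENNReal.log_monotone (ENat.toENNReal_le.mpr (hc n))
    refine (EReal.div_le_div_right_of_nonneg (Nat.cast_nonneg' n) hlog).trans_eq ?_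
    rw [← EReal.coe_coe_eq_natCast, ← EReal.coe_coe_eq_natCast, ← EReal.coe_mul,
      ← EReal.coe_div]
    congr 1
    field_simp
    push_cast
    ring
  have hlim : Tendsto (fun n : ℕ => ((Real.log α + c * Real.log α / n : ℝ) : EReal)) atTop
      (𝓝 (Real.log α)) := by
    rw [EReal.tendsto_coe]
    simpa using tendsto_const_nhds.add (tendsto_const_div_atTop_nhds_zero_nat (c * Real.log α))
  exact (limsup_le_limsup hrate).trans hlim.limsup_eq.le

theorem log_le_topEntropy {α : ℕ} (hα : 0 < α) {ε : ℝ} (hε : 0 < ε)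
    (h : ∀ n, (α ^ n : ℕ) ≤ coverCard d f F ε n) :
    Real.log α ≤ topEntropy d f F := by
  refine le_trans ?_ (le_iSup₂ (f := fun ε (_ : 0 < ε) => atTop.limsup fun n : ℕ =>
    ENNReal.log (coverCard d f F ε n) / (n : EReal)) ε hε)
  have hrate : ∀ᶠ n : ℕ in atTop,
      (Real.log α : EReal) ≤ ENNReal.log (coverCard d f F ε n) / (n : EReal) := by
    filter_upwards [eventually_ge_atTop 1] with n hn
    have hlog : (n : EReal) * Real.log α ≤ ENNReal.log (coverCard d f F ε n) := by
      rw [← ENNReal.log_natCast_pow hα]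
      exact ENNReal.log_monotone (ENat.toENNReal_le.mpr (h n))
    refine le_trans (le_of_eq ?_) (EReal.div_le_div_right_of_nonneg (Nat.cast_nonneg' n) hlog)
    rw [mul_comm, ← EReal.mul_div, EReal.div_self (EReal.natCast_ne_bot n)
      (EReal.natCast_ne_top n) (by exact_mod_cast (Nat.one_le_iff_ne_zero.mp hn)), mul_one]
  exact (limsup_const _).symm.le.trans (limsup_le_limsup hrate)

end Entropy

section SeqDist

variable {ι : Type*}

theorem summable_two_zpow_neg_abs : Summable fun i : ℤ => (2 : ℝ) ^ (-|i|) := by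
  apply Summable.of_nat_of_neg <;>
    simpa [zpow_neg, ← inv_pow] using summable_geometric_two

noncomputable def seqDist (a b : ℤ → ι) : ℝ :=
  ∑' i, {i | a i ≠ b i}.indicator (fun i : ℤ => (2 : ℝ) ^ (-|i|)) i

theorem summable_indicator_ne (a b : ℤ → ι) :
    Summable fun i => {i | a i ≠ b i}.indicator (fun i : ℤ => (2 : ℝ) ^ (-|i|)) i :=
  summable_two_zpow_neg_abs.indicator _

theorem seqDist_comm (a b : ℤ → ι) : seqDist a b = seqDist b a := by
  simp only [seqDist, ne_comm]

theorem seqDist_triangle (a b c : ℤ → ι) : seqDist a c ≤ seqDist a b + seqDist b c := by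
  rw [seqDist, seqDist, seqDist,
    ← (summable_indicator_ne a b).tsum_add (summable_indicator_ne b c)]
  refine (summable_indicator_ne a c).tsum_le_tsum (fun i => ?_)
    ((summable_indicator_ne a b).add (summable_indicator_ne b c))
  classical
  simp only [Set.indicator_apply, Set.mem_ofPred_eq]
  split_ifs <;> simp_all <;> positivity

theorem one_le_seqDist {a b : ℤ → ι} (h : a 0 ≠ b 0) : 1 ≤ seqDist a b := by
  have := (summable_indicator_ne a b).le_tsum 0 fun i _ =>
    Set.indicator_nonneg (fun i _ => zpow_nonneg zero_le_two _) i
  simpa [seqDist, h] using this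

theorem exists_seqDist_lt {ε : ℝ} (hε : 0 < ε) :
    ∃ k : ℕ, ∀ a b : ℤ → ι, (∀ i, -(k : ℤ) ≤ i → i ≤ k → a i = b i) → seqDist a b < ε := by
  obtain ⟨k, hk⟩ := (((tendsto_tsum_compl_atTop_zero fun i : ℤ => (2 : ℝ) ^ (-|i|)).comp
    Finset.tendsto_Icc_neg).eventually (eventually_lt_nhds hε)).exists
  refine ⟨k, fun a b hab => lt_of_le_of_lt ?_ hk⟩
  refine ((summable_indicator_ne a b).tsum_le_tsum (fun i => ?_)
    (summable_two_zpow_neg_abs.indicator _)).trans_eq (tsum_subtype _ _).symm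
  refine Set.indicator_le_indicator_of_subset (fun i hi => ?_)
    (fun i => zpow_nonneg zero_le_two _) i
  simp only [Set.mem_ofPred_eq, Finset.mem_Icc] at hi ⊢
  exact fun hmem => hi (hab i hmem.1 hmem.2)

end SeqDist

section Concatenation

variable {ι M : Type*} {I : ι → ℝ → M}

def IsConcatenation (I : ι → ℝ → M) (a : ℤ → ι) (γ : ℝ → M) : Prop :=
  ∀ i : ℤ, ∀ s ∈ Set.Icc (0 : ℝ) 1, γ (i + s) = I (a i) s

noncomputable def concatArcs (I : ι → ℝ → M) (a : ℤ → ι) : ℝ → M :=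
  fun t => I (a ⌊t⌋) (Int.fract t)

theorem isConcatenation_concatArcs (hjoin : ∀ j k, I j 1 = I k 0) (a : ℤ → ι) :
    IsConcatenation I a (concatArcs I a) := by
  intro i s hs
  rcases hs.2.lt_or_eq with hs1 | rfl
  · have hfloor : ⌊(i : ℝ) + s⌋ = i := by
      rw [add_comm, Int.floor_add_intCast, Int.floor_eq_zero_iff.2 ⟨hs.1, hs1⟩, zero_add]
    have hfract : Int.fract ((i : ℝ) + s) = s := by
      rw [add_comm, Int.fract_add_intCast, Int.fract_eq_self.2 ⟨hs.1, hs1⟩]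
    simp only [concatArcs, hfloor, hfract]
  · have hi : (i : ℝ) + 1 = ((i + 1 : ℤ) : ℝ) := by push_cast; ring
    simp only [concatArcs, hi, Int.floor_intCast, Int.fract_intCast]
    exact (hjoin _ _).symm

theorem iterate_timeOneShift (γ : ℝ → M) (m : ℕ) :
    timeOneShift^[m] γ = fun t => γ (t + m) := by
  induction m generalizing γ with
  | zero => simp
  | succ m ih =>
    rw [Function.iterate_succ_apply, ih]
    ext t
    simp only [timeOneShift, Nat.cast_succ, add_assoc]

theorem IsConcatenation.iterate_timeOneShift {a : ℤ → ι} {γ : ℝ → M}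
    (h : IsConcatenation I a γ) (m : ℕ) :
    IsConcatenation I (fun i => a (i + m)) (timeOneShift^[m] γ) := by
  intro i s hs
  rw [_root_.iterate_timeOneShift, ← h (i + m) s hs]
  push_cast
  ring_nf

theorem IsConcatenation.intervalIntegral_dist [PseudoMetricSpace M] {a b : ℤ → ι}
    {γ₁ γ₂ : ℝ → M} (h₁ : IsConcatenation I a γ₁) (h₂ : IsConcatenation I b γ₂) (i : ℤ) :
    ∫ t in (i : ℝ)..i + 1, dist (γ₁ t) (γ₂ t) =
      ∫ s in (0 : ℝ)..1, dist (I (a i) s) (I (b i) s) := by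
  have hshift := intervalIntegral.integral_comp_add_left (fun t => dist (γ₁ t) (γ₂ t)) (i : ℝ)
    (a := 0) (b := 1)
  rw [add_zero] at hshift
  rw [← hshift]
  refine intervalIntegral.integral_congr fun s hs => ?_
  rw [Set.uIcc_of_le zero_le_one] at hs
  simp only [h₁ i s hs, h₂ i s hs]

theorem rho_eq_mul_seqDist [PseudoMetricSpace M] {μ : ℝ}
    (hsep : ∀ j k, j ≠ k → ∫ t in (0 : ℝ)..1, dist (I j t) (I k t) = μ)
    {a b : ℤ → ι} {γ₁ γ₂ : ℝ → M} (h₁ : IsConcatenation I a γ₁) (h₂ : IsConcatenation I b γ₂) :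
    rho γ₁ γ₂ = μ * seqDist a b := by
  rw [rho, seqDist, ← tsum_mul_left]
  refine tsum_congr fun i => ?_
  rw [h₁.intervalIntegral_dist h₂]
  by_cases hab : a i = b i
  · simp [hab]
  · simp [hab, hsep _ _ hab, mul_comm]

end Concatenation

section Counting

def extendWord {ι : Type*} {n : ℕ} (j₀ : ι) (w : Fin n → ι) : ℤ → ι :=
  fun i => if h : 0 ≤ i ∧ i < n then w ⟨i.toNat, by omega⟩ else j₀

theorem extendWord_of_nonneg_of_lt {ι : Type*} {n : ℕ} (j₀ : ι) (w : Fin n → ι) {i : ℤ}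
    (h₀ : 0 ≤ i) (hn : i < n) : extendWord j₀ w i = w ⟨i.toNat, by omega⟩ :=
  dif_pos ⟨h₀, hn⟩

variable {α : ℕ} {I : Fin α → ℝ → Plane} {μ : ℝ}

theorem coverCard_arcConcatenations_le (hα : 0 < α) (hjoin : ∀ j k, I j 1 = I k 0)
    (hμ : 0 < μ) (hsep : ∀ j k, j ≠ k → ∫ t in (0 : ℝ)..1, dist (I j t) (I k t) = μ)
    {ε : ℝ} (hε : 0 < ε) :
    ∃ c : ℕ, ∀ n, coverCard rho timeOneShift (arcConcatenations I) ε n ≤ (α ^ (n + c) : ℕ) := by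
  obtain ⟨k, hk⟩ := exists_seqDist_lt (ι := Fin α) (div_pos hε hμ)
  refine ⟨2 * k, fun n => ?_⟩
  classical
  -- a word of length `n + 2k` fixes the arcs on the window `[-k, n + k)`
  let code : (Fin (n + 2 * k) → Fin α) → ℤ → Fin α := fun w i => extendWord ⟨0, hα⟩ w (i + k)
  let E := Finset.univ.image fun w => concatArcs I (code w)
  have hcover : IsDynCover rho timeOneShift (arcConcatenations I) ε n E := by
    refine ⟨?_, ?_⟩
    · simp only [E, Finset.coe_image, Finset.coe_univ, Set.image_univ]
      rintro _ ⟨w, rfl⟩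
      exact ⟨_, isConcatenation_concatArcs hjoin _⟩
    · rintro y ⟨b, hb⟩
      refine ⟨concatArcs I (code fun j => b (j - k)),
        Finset.mem_image_of_mem _ (Finset.mem_univ _), fun m hm => ?_⟩
      rw [rho_eq_mul_seqDist hsep ((isConcatenation_concatArcs hjoin _).iterate_timeOneShift m)
        (IsConcatenation.iterate_timeOneShift hb m), ← lt_div_iff₀' hμ]
      refine hk _ _ fun i hi₁ hi₂ => ?_
      simp only [code]
      rw [extendWord_of_nonneg_of_lt _ _ (by omega) (by push_cast; omega)]
      congr 1
      rw [Int.toNat_of_nonneg (by omega)]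
      ring
  calc coverCard rho timeOneShift (arcConcatenations I) ε n ≤ E.card := iInf₂_le E hcover
    _ ≤ (α ^ (n + 2 * k) : ℕ) := by
      exact_mod_cast Finset.card_image_le.trans (by simp)

theorem pow_le_coverCard_arcConcatenations (hα : 0 < α) (hjoin : ∀ j k, I j 1 = I k 0)
    (hμ : 0 < μ) (hsep : ∀ j k, j ≠ k → ∫ t in (0 : ℝ)..1, dist (I j t) (I k t) = μ) (n : ℕ) :
    (α ^ n : ℕ) ≤ coverCard rho timeOneShift (arcConcatenations I) (μ / 2) n := by
  refine le_iInf₂ fun E hE => ?_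
  let code : (Fin n → Fin α) → ℤ → Fin α := extendWord ⟨0, hα⟩
  have hcode (w) : IsConcatenation I (code w) (concatArcs I (code w)) :=
    isConcatenation_concatArcs hjoin _
  choose center hcenterE hclose using fun w => hE.2 _ ⟨code w, hcode w⟩
  have hinj : Function.Injective center := by
    intro w w' hww'
    by_contra hne
    obtain ⟨m, hm⟩ := Function.ne_iff.mp hne
    obtain ⟨c, hc⟩ := hE.1 (hcenterE w)
    have hnear (v) (hv : center v = center w) :
        seqDist (fun i => c (i + m)) (fun i => code v (i + m)) < 1 / 2 := by
      have := hclose v m m.isLt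
      rw [hv, rho_eq_mul_seqDist hsep (IsConcatenation.iterate_timeOneShift hc m)
        ((hcode v).iterate_timeOneShift m)] at this
      nlinarith
    have hfar : 1 ≤ seqDist (fun i => code w (i + m)) (fun i => code w' (i + m)) := by
      refine one_le_seqDist ?_
      simp only [zero_add, code, extendWord_of_nonneg_of_lt _ _ (Int.natCast_nonneg m)
        (Int.ofNat_lt.mpr m.isLt), Int.toNat_natCast]
      exact hm
    linarith [seqDist_triangle (fun i => code w (i + m)) (fun i => c (i + m))
      (fun i => code w' (i + m)), seqDist_comm (fun i => code w (i + m)) (fun i => c (i + m)),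
      hnear w rfl, hnear w' hww'.symm]
  have hcard := Fintype.card_le_of_injective (fun w => (⟨center w, hcenterE w⟩ : E))
    fun w w' h => hinj (congrArg Subtype.val h)
  simp only [Fintype.card_fun, Fintype.card_fin, Fintype.card_coe] at hcard
  exact_mod_cast hcard

end Counting

theorem entropy_arcConcatenations_general {α : ℕ} (hα : 2 ≤ α) (I : Fin α → ℝ → Plane)
    (h0 : ∀ j, I j 0 = 0) (h1 : ∀ j, I j 1 = 0)
    (μ : ℝ) (hμ : 0 < μ)
    (hsep : ∀ j k, j ≠ k → (∫ t in (0 : ℝ)..1, dist (I j t) (I k t)) = μ) :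
    (∀ γ ∈ arcConcatenations I, timeOneShift γ ∈ arcConcatenations I) ∧
    topEntropy rho timeOneShift (arcConcatenations I) = (Real.log α : EReal) := by
  have hαpos : 0 < α := by omega
  have hjoin (j k : Fin α) : I j 1 = I k 0 := by rw [h0, h1]
  refine ⟨fun γ ⟨a, ha⟩ => ⟨_, IsConcatenation.iterate_timeOneShift ha 1⟩, le_antisymm ?_ ?_⟩
  · exact topEntropy_le_log hαpos fun ε hε =>
      coverCard_arcConcatenations_le hαpos hjoin hμ hsep hε
  · exact log_le_topEntropy hαpos (half_pos hμ)
      (pow_le_coverCard_arcConcatenations hαpos hjoin hμ hsep)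

/-- Given `α ≥ 2` Lipschitz arcs `I j : [0,1] → ℝ²` based at the origin,
any two of which are at integrated distance `μ > 0` from each other, the set `Ω*` of
concatenations of these arcs is invariant under the time-one shift `F₁`, and the topological
entropy of `F₁` on `(Ω*, ρ)` equals `log α`. -/
theorem entropy_arcConcatenations {α : ℕ} (hα : 2 ≤ α) (I : Fin α → ℝ → Plane)
    (hlip : ∀ j, ∃ L : NNReal, LipschitzOnWith L (I j) (Set.Icc 0 1))
    (h0 : ∀ j, I j 0 = 0) (h1 : ∀ j, I j 1 = 0)
    (μ : ℝ) (hμ : 0 < μ)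
    (hsep : ∀ j k, j ≠ k → (∫ t in (0 : ℝ)..1, dist (I j t) (I k t)) = μ) :
    (∀ γ ∈ arcConcatenations I, timeOneShift γ ∈ arcConcatenations I) ∧
    topEntropy rho timeOneShift (arcConcatenations I) = (Real.log α : EReal) :=
  entropy_arcConcatenations_general hα I h0 h1 μ hμ hsep
end

section
/- Let (M,d) be a compact metric space, L > 0, and let A be a set of L-Lipschitz curves ℝ → M that is invariant under every time shift. Let c ≥ 1 be an integer and let Ã = {t ↦ γ(t/c) : γ ∈ A}. If the topological entropy of the time-one shift F₁ restricted to (Ã,ρ) is infinite, then the topological entropy of F₁ restricted to (A,ρ) is infinite. -/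
open Filter

/-- The time-rescaling map `H(γ)(t) = γ(t/c)`. -/
noncomputable def timeRescale {M : Type*} (c : ℕ) (γ : ℝ → M) : ℝ → M := fun t => γ (t / c)


/-!
Write `H` for `timeRescale c`. Since `F₁^[i] (H γ) = H (t ↦ (F₁^[k] γ) (t + r))` with
`k = ⌊i / c⌋ ≤ i` and `r = i / c - k ∈ [0, 1)`, it suffices that `H` composed with a shift by
`r ∈ [0, 1)` is Lipschitz for `ρ` on continuous curves, uniformly in `r`. Then `H` maps an
`(n, ε)`-dense subset of `A` onto an `(n, Cε)`-dense subset of `Ã`, so `S(Ã, Cε, n) ≤ S(A, ε, n)`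
and `h(F₁|Ã) ≤ h(F₁|A)`. The Lipschitz bound is a term-by-term estimate of the series defining
`ρ`: on the `i`-th unit interval, `H γ` runs through a piece of `γ` of length `1/c` near `i / c`,
so the `i`-th integral is at most `3c · 2 ^ (|i| / c + 1) · ρ`; against the weight `2 ^ (-|i|)`
this is `O(2 ^ (-|i| / 2))` when `c ≥ 2`, a summable series. For `c = 1`, `H` is the identity.
-/

open MeasureTheory

lemma summable_pow_natAbs {q : ℝ} (h0 : 0 ≤ q) (h1 : q < 1) :
    Summable fun i : ℤ => q ^ i.natAbs := by
  apply Summable.of_nat_of_neg <;> simpa using summable_geometric_of_lt_one h0 h1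

lemma LipschitzCurve.continuous {M : Type*} [PseudoMetricSpace M] {L : ℝ} {γ : ℝ → M}
    (h : LipschitzCurve L γ) : Continuous γ :=
  (LipschitzWith.of_dist_le_mul (K := L.toNNReal) fun s t =>
    (h s t).trans (by rw [Real.dist_eq]; gcongr; exact L.le_coe_toNNReal)).continuous

section Rho

variable {M : Type*} [PseudoMetricSpace M]

lemma rho_term_nonneg (γ₁ γ₂ : ℝ → M) (i : ℤ) :
    0 ≤ (2 : ℝ) ^ (-|i|) * ∫ t in (i : ℝ)..(i : ℝ) + 1, dist (γ₁ t) (γ₂ t) :=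
  mul_nonneg (by positivity) (intervalIntegral.integral_nonneg (by linarith) fun _ _ => dist_nonneg)

lemma rho_nonneg (γ₁ γ₂ : ℝ → M) : 0 ≤ rho γ₁ γ₂ :=
  tsum_nonneg (rho_term_nonneg γ₁ γ₂)

variable [BoundedSpace M]

lemma summable_rho_term (γ₁ γ₂ : ℝ → M) :
    Summable fun i : ℤ => (2 : ℝ) ^ (-|i|) * ∫ t in (i : ℝ)..(i : ℝ) + 1, dist (γ₁ t) (γ₂ t) := by
  set D := Metric.diam (Set.univ : Set M)
  refine Summable.of_nonneg_of_le (rho_term_nonneg γ₁ γ₂) (fun i => ?_)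
    ((summable_pow_natAbs (q := 2⁻¹) (by norm_num) (by norm_num)).mul_right D)
  have hI : ∫ t in (i : ℝ)..(i : ℝ) + 1, dist (γ₁ t) (γ₂ t) ≤ D := by
    refine (Real.le_norm_self _).trans ?_
    simpa using intervalIntegral.norm_integral_le_of_norm_le_const (a := (i : ℝ)) (b := i + 1)
      fun t _ => (Real.norm_of_nonneg dist_nonneg).trans_le <|
        Metric.dist_le_diam_of_mem (Bornology.isBounded_univ.2 ‹_›) (Set.mem_univ (γ₁ t))
          (Set.mem_univ (γ₂ t))
  rw [zpow_neg, Int.abs_eq_natAbs, zpow_natCast, ← inv_pow]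
  gcongr

lemma integral_dist_le_rho (γ₁ γ₂ : ℝ → M) (j : ℤ) :
    ∫ t in (j : ℝ)..(j : ℝ) + 1, dist (γ₁ t) (γ₂ t) ≤ (2 : ℝ) ^ |j| * rho γ₁ γ₂ := by
  have h := (summable_rho_term γ₁ γ₂).le_tsum j fun i _ => rho_term_nonneg γ₁ γ₂ i
  rwa [← rho, zpow_neg, inv_mul_le_iff₀ (by positivity)] at h

/-- `[a, b] ⊆ [⌊a⌋, ⌊a⌋ + 2]`, and the weight of the second unit interval in `ρ` is at least half
that of the first. -/
lemma integral_dist_le_rho_of_le_add_one {γ₁ γ₂ : ℝ → M} (h₁ : Continuous γ₁)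
    (h₂ : Continuous γ₂) {a b : ℝ} (hab : a ≤ b) (hb : b ≤ a + 1) :
    ∫ t in a..b, dist (γ₁ t) (γ₂ t) ≤ 3 * (2 : ℝ) ^ |⌊a⌋| * rho γ₁ γ₂ := by
  set j := ⌊a⌋
  have hint : ∀ u v : ℝ, IntervalIntegrable (fun t => dist (γ₁ t) (γ₂ t)) volume u v :=
    fun u v => (h₁.dist h₂).intervalIntegrable u v
  have hρ := rho_nonneg γ₁ γ₂
  have hnext : ∫ t in (j : ℝ) + 1..(j : ℝ) + 1 + 1, dist (γ₁ t) (γ₂ t)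
      ≤ 2 * (2 : ℝ) ^ |j| * rho γ₁ γ₂ := by
    calc _ ≤ (2 : ℝ) ^ |j + 1| * rho γ₁ γ₂ := by exact_mod_cast integral_dist_le_rho γ₁ γ₂ (j + 1)
      _ ≤ (2 : ℝ) ^ (|j| + 1) * rho γ₁ γ₂ := by
          gcongr
          · norm_num
          · exact (abs_add_le j 1).trans (by simp)
      _ = 2 * (2 : ℝ) ^ |j| * rho γ₁ γ₂ := by rw [zpow_add_one₀ two_ne_zero]; ring
  calc ∫ t in a..b, dist (γ₁ t) (γ₂ t)
      ≤ ∫ t in (j : ℝ)..(j : ℝ) + 1 + 1, dist (γ₁ t) (γ₂ t) := by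
        refine intervalIntegral.integral_mono_interval (Int.floor_le a) ?_ ?_
          (ae_of_all _ fun _ => dist_nonneg) (hint _ _)
        · linarith
        · linarith [Int.lt_floor_add_one a]
    _ = (∫ t in (j : ℝ)..(j : ℝ) + 1, dist (γ₁ t) (γ₂ t))
          + ∫ t in (j : ℝ) + 1..(j : ℝ) + 1 + 1, dist (γ₁ t) (γ₂ t) :=
        (intervalIntegral.integral_add_adjacent_intervals (hint _ _) (hint _ _)).symm
    _ ≤ (2 : ℝ) ^ |j| * rho γ₁ γ₂ + 2 * (2 : ℝ) ^ |j| * rho γ₁ γ₂ :=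
        add_le_add (integral_dist_le_rho γ₁ γ₂ j) hnext
    _ = 3 * (2 : ℝ) ^ |j| * rho γ₁ γ₂ := by ring

end Rho

lemma abs_floor_div_add_le (c : ℕ) {r : ℝ} (hr : r ∈ Set.Ico (0 : ℝ) 1) (i : ℤ) :
    |(⌊(i : ℝ) / c + r⌋ : ℝ)| ≤ |(i : ℝ)| / c + 1 := by
  have hi : |(i : ℝ) / c| ≤ |(i : ℝ)| / c := by rw [abs_div, Nat.abs_cast]
  rw [abs_le] at hi ⊢
  constructor
  · linarith [Int.lt_floor_add_one ((i : ℝ) / c + r), hr.1]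
  · linarith [Int.floor_le ((i : ℝ) / c + r), hr.2]

lemma two_zpow_neg_abs_mul_two_zpow_abs_floor_le {c : ℕ} (hc : 2 ≤ c) {r : ℝ}
    (hr : r ∈ Set.Ico (0 : ℝ) 1) (i : ℤ) :
    (2 : ℝ) ^ (-|i|) * 2 ^ |⌊(i : ℝ) / c + r⌋| ≤ 2 * ((2 : ℝ) ^ (-(1 / 2) : ℝ)) ^ i.natAbs := by
  have hj := abs_floor_div_add_le c hr i
  have hc2 : |(i : ℝ)| / c ≤ |(i : ℝ)| / 2 := by gcongr; exact_mod_cast hc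
  have hexp : ((-|i| + |⌊(i : ℝ) / c + r⌋| : ℤ) : ℝ) ≤ 1 + -(1 / 2) * i.natAbs := by
    push_cast
    rw [Nat.cast_natAbs, Int.cast_abs]
    linarith
  calc (2 : ℝ) ^ (-|i|) * 2 ^ |⌊(i : ℝ) / c + r⌋|
      = (2 : ℝ) ^ ((-|i| + |⌊(i : ℝ) / c + r⌋| : ℤ) : ℝ) := by
        rw [Real.rpow_intCast, zpow_add₀ two_ne_zero]
    _ ≤ (2 : ℝ) ^ (1 + -(1 / 2) * i.natAbs : ℝ) := Real.rpow_le_rpow_of_exponent_le one_le_two hexp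
    _ = 2 * ((2 : ℝ) ^ (-(1 / 2) : ℝ)) ^ i.natAbs := by
        rw [Real.rpow_add two_pos, Real.rpow_one, Real.rpow_mul zero_le_two, Real.rpow_natCast]

section Rescale

variable {M : Type*} [PseudoMetricSpace M] [BoundedSpace M]

lemma rho_term_timeRescale_le {c : ℕ} (hc : 2 ≤ c) {γ₁ γ₂ : ℝ → M} (h₁ : Continuous γ₁)
    (h₂ : Continuous γ₂) {r : ℝ} (hr : r ∈ Set.Ico (0 : ℝ) 1) (i : ℤ) :
    (2 : ℝ) ^ (-|i|) * ∫ t in (i : ℝ)..(i : ℝ) + 1,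
        dist (timeRescale c (fun t => γ₁ (t + r)) t) (timeRescale c (fun t => γ₂ (t + r)) t)
      ≤ 6 * c * rho γ₁ γ₂ * ((2 : ℝ) ^ (-(1 / 2) : ℝ)) ^ i.natAbs := by
  have hc0 : (0 : ℝ) < c := by positivity
  have hρ := rho_nonneg γ₁ γ₂
  have hsubst : ∫ t in (i : ℝ)..(i : ℝ) + 1,
      dist (timeRescale c (fun t => γ₁ (t + r)) t) (timeRescale c (fun t => γ₂ (t + r)) t)
      = c * ∫ s in (i : ℝ) / c + r..((i : ℝ) + 1) / c + r, dist (γ₁ s) (γ₂ s) := by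
    simp only [timeRescale]
    rw [intervalIntegral.integral_comp_div (fun s => dist (γ₁ (s + r)) (γ₂ (s + r))) hc0.ne',
      intervalIntegral.integral_comp_add_right (fun s => dist (γ₁ s) (γ₂ s)) r, smul_eq_mul]
  have hstep : 1 / (c : ℝ) ≤ 1 := by rw [div_le_one hc0]; exact_mod_cast (by omega : 1 ≤ c)
  have hint := integral_dist_le_rho_of_le_add_one h₁ h₂
    (a := (i : ℝ) / c + r) (b := ((i : ℝ) + 1) / c + r)
    (by rw [add_div]; linarith [one_div_nonneg.2 hc0.le]) (by rw [add_div]; linarith)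
  calc (2 : ℝ) ^ (-|i|) * ∫ t in (i : ℝ)..(i : ℝ) + 1,
        dist (timeRescale c (fun t => γ₁ (t + r)) t) (timeRescale c (fun t => γ₂ (t + r)) t)
      ≤ (2 : ℝ) ^ (-|i|) * (c * (3 * (2 : ℝ) ^ |⌊(i : ℝ) / c + r⌋| * rho γ₁ γ₂)) := by
        rw [hsubst]; gcongr
    _ = 3 * c * rho γ₁ γ₂ * ((2 : ℝ) ^ (-|i|) * (2 : ℝ) ^ |⌊(i : ℝ) / c + r⌋|) := by ring
    _ ≤ 3 * c * rho γ₁ γ₂ * (2 * ((2 : ℝ) ^ (-(1 / 2) : ℝ)) ^ i.natAbs) := by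
        exact mul_le_mul_of_nonneg_left (two_zpow_neg_abs_mul_two_zpow_abs_floor_le hc hr i)
          (by positivity)
    _ = 6 * c * rho γ₁ γ₂ * ((2 : ℝ) ^ (-(1 / 2) : ℝ)) ^ i.natAbs := by ring

lemma exists_rho_timeRescale_shift_le {c : ℕ} (hc : 2 ≤ c) :
    ∃ C > 0, ∀ γ₁ γ₂ : ℝ → M, Continuous γ₁ → Continuous γ₂ → ∀ r ∈ Set.Ico (0 : ℝ) 1,
      rho (timeRescale c fun t => γ₁ (t + r)) (timeRescale c fun t => γ₂ (t + r))
        ≤ C * rho γ₁ γ₂ := by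
  have hq := summable_pow_natAbs (q := (2 : ℝ) ^ (-(1 / 2) : ℝ)) (by positivity)
    (Real.rpow_lt_one_of_one_lt_of_neg one_lt_two (by norm_num))
  have hK : 0 < ∑' i : ℤ, ((2 : ℝ) ^ (-(1 / 2) : ℝ)) ^ i.natAbs :=
    hq.tsum_pos (fun _ => by positivity) 0 (by simp)
  refine ⟨6 * c * ∑' i : ℤ, ((2 : ℝ) ^ (-(1 / 2) : ℝ)) ^ i.natAbs, by positivity,
    fun γ₁ γ₂ h₁ h₂ r hr => ?_⟩
  calc rho (timeRescale c fun t => γ₁ (t + r)) (timeRescale c fun t => γ₂ (t + r))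
      ≤ ∑' i : ℤ, 6 * c * rho γ₁ γ₂ * ((2 : ℝ) ^ (-(1 / 2) : ℝ)) ^ i.natAbs :=
        Summable.tsum_le_tsum (rho_term_timeRescale_le hc h₁ h₂ hr) (summable_rho_term _ _)
          (hq.mul_left _)
    _ = _ := by rw [tsum_mul_left]; ring

end Rescale

lemma timeOneShift_iterate {M : Type*} (γ : ℝ → M) (k : ℕ) :
    timeOneShift^[k] γ = fun t => γ (t + k) := by
  induction k with
  | zero => simp
  | succ k ih =>
    rw [Function.iterate_succ_apply', ih]
    funext t
    simp only [timeOneShift]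
    congr 1
    push_cast
    ring

lemma timeOneShift_iterate_timeRescale {M : Type*} (c : ℕ) (γ : ℝ → M) (i k : ℕ) :
    timeOneShift^[i] (timeRescale c γ)
      = timeRescale c fun t => timeOneShift^[k] γ (t + ((i : ℝ) / c - k)) := by
  funext t
  simp only [timeOneShift_iterate, timeRescale]
  congr 1
  ring

lemma exists_rho_iterate_timeRescale_lt {M : Type*} [PseudoMetricSpace M] [BoundedSpace M]
    {c : ℕ} (hc : 2 ≤ c) :
    ∃ C > 0, ∀ γ₁ γ₂ : ℝ → M, Continuous γ₁ → Continuous γ₂ → ∀ {n : ℕ} {ε : ℝ},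
      (∀ i < n, rho (timeOneShift^[i] γ₁) (timeOneShift^[i] γ₂) < ε) →
      ∀ i < n, rho (timeOneShift^[i] (timeRescale c γ₁)) (timeOneShift^[i] (timeRescale c γ₂))
        < C * ε := by
  obtain ⟨C, hC, hρ⟩ := exists_rho_timeRescale_shift_le (M := M) hc
  refine ⟨C, hC, fun γ₁ γ₂ h₁ h₂ n ε hclose i hi => ?_⟩
  set k := ⌊(i : ℝ) / c⌋₊
  have hkn : k < n := (Nat.floor_le_of_le
    (div_le_self (Nat.cast_nonneg i) (by exact_mod_cast (by omega : 1 ≤ c)))).trans_lt hi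
  have hr : (i : ℝ) / c - k ∈ Set.Ico (0 : ℝ) 1 :=
    ⟨sub_nonneg.2 (Nat.floor_le (by positivity)), by linarith [Nat.lt_floor_add_one ((i : ℝ) / c)]⟩
  have hcont : ∀ γ : ℝ → M, Continuous γ → Continuous (timeOneShift^[k] γ) := fun γ hγ => by
    rw [timeOneShift_iterate]; fun_prop
  rw [timeOneShift_iterate_timeRescale c γ₁ i k, timeOneShift_iterate_timeRescale c γ₂ i k]
  exact (hρ _ _ (hcont γ₁ h₁) (hcont γ₂ h₂) _ hr).trans_lt
    (mul_lt_mul_of_pos_left (hclose k hkn) hC)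

section Entropy

variable {X Y : Type*} {d : X → X → ℝ} {d' : Y → Y → ℝ} {f : X → X} {g : Y → Y}

lemma coverCard_image_le {F : Set X} {φ : X → Y} {ε ε' : ℝ} {n : ℕ}
    (hφ : ∀ x ∈ F, ∀ y ∈ F, (∀ i < n, d (f^[i] x) (f^[i] y) < ε) →
      ∀ i < n, d' (g^[i] (φ x)) (g^[i] (φ y)) < ε') :
    coverCard d' g (φ '' F) ε' n ≤ coverCard d f F ε n := by
  classical
  refine le_iInf₂ fun E hE =>
    iInf₂_le_of_le (E.image φ) ⟨?_, ?_⟩ (by exact_mod_cast E.card_image_le)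
  · rw [Finset.coe_image]
    exact Set.image_mono hE.1
  · rintro _ ⟨y, hy, rfl⟩
    obtain ⟨x, hx, hxy⟩ := hE.2 y hy
    exact ⟨φ x, Finset.mem_image_of_mem φ hx, hφ x (hE.1 hx) y hy hxy⟩

lemma topEntropy_le_of_coverCard_le {F : Set X} {G : Set Y}
    (h : ∀ ε' > 0, ∃ ε > 0, ∀ n, coverCard d' g G ε' n ≤ coverCard d f F ε n) :
    topEntropy d' g G ≤ topEntropy d f F := by
  refine iSup₂_le fun ε' hε' => ?_
  obtain ⟨ε, hε, hle⟩ := h ε' hε'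
  refine (limsup_le_limsup (Eventually.of_forall fun n => ?_)).trans
    (le_iSup₂ (f := fun ε (_ : 0 < ε) =>
      atTop.limsup fun n : ℕ => ENNReal.log (coverCard d f F ε n) / (n : EReal)) ε hε)
  exact EReal.div_le_div_right_of_nonneg (by exact_mod_cast Nat.zero_le n)
    (ENNReal.log_monotone (ENat.toENNReal_le.2 (hle n)))

end Entropy

theorem entropy_infinite_of_rescaled_infinite_general {M : Type*} [MetricSpace M] [CompactSpace M]
    (L : ℝ) (A : Set (ℝ → M)) (hlipA : ∀ γ ∈ A, LipschitzCurve L γ)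
    (c : ℕ) (hc : 1 ≤ c)
    (h : topEntropy rho timeOneShift (timeRescale (M := M) c '' A) = ⊤) :
    topEntropy rho timeOneShift A = ⊤ := by
  obtain rfl | hc2 := hc.eq_or_lt
  · have hid : timeRescale (M := M) 1 = id := by
      funext γ t
      simp [timeRescale]
    rwa [hid, Set.image_id] at h
  obtain ⟨C, hC, hρ⟩ := exists_rho_iterate_timeRescale_lt (M := M) hc2
  rw [eq_top_iff, ← h]
  refine topEntropy_le_of_coverCard_le fun ε' hε' => ⟨ε' / C, by positivity, fun n => ?_⟩
  refine coverCard_image_le fun γ₁ h₁ γ₂ h₂ hclose => ?_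
  simpa [mul_div_cancel₀ ε' hC.ne'] using
    hρ γ₁ γ₂ (hlipA γ₁ h₁).continuous (hlipA γ₂ h₂).continuous hclose

/-- Let `A` be a shift-invariant set of `L`-Lipschitz curves into a
compact metric space, `c ≥ 1` an integer, and `Ã = {t ↦ γ(t/c) : γ ∈ A}`. If the topological
entropy of the time-one shift `F₁` on `(Ã, ρ)` is infinite, then so is its topological
entropy on `(A, ρ)`. -/
theorem entropy_infinite_of_rescaled_infinite {M : Type*} [MetricSpace M] [CompactSpace M]
    (L : ℝ) (hL : 0 < L) (A : Set (ℝ → M)) (hlipA : ∀ γ ∈ A, LipschitzCurve L γ)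
    (hshift : ∀ γ ∈ A, ∀ s : ℝ, (fun t => γ (t + s)) ∈ A)
    (c : ℕ) (hc : 1 ≤ c)
    (h : topEntropy rho timeOneShift (timeRescale (M := M) c '' A) = ⊤) :
    topEntropy rho timeOneShift A = ⊤ :=
  entropy_infinite_of_rescaled_infinite_general L A hlipA c hc h
end
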